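/- arXiv:1509.02249 — 3 statements merged into one kernel-verified Lean document; each statement's English description precedes it below -/
import Mathlib

section
/- Let t ≥ 200 be an integer, let p be real with 1/(t+1) ≤ p ≤ 2/(t+3), and let s and s' be integers with 0 ≤ s' ≤ s, s ≥ 10 and t − s + s' ≥ 1. Then f(t−s+s', s, p)·f(t+s−s', s', p) < 0.99·((t+2)·p^{t+1}·q + p^{t+2})², where q := 1 − p. -/
open Finset

open scoped Classical

noncomputable section

/-- The `p`-weight of a family of subsets of `[n] = {1,…,n}`. -/
def mu (n : ℕ) (p : ℝ) (𝓕 : Finset (Finset ℕ)) : ℝ :=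
  ∑ F ∈ 𝓕, p ^ F.card * (1 - p) ^ (n - F.card)

/-- Two families are cross `t`-intersecting. -/
def CrossIntersecting (t : ℕ) (𝓐 𝓑 : Finset (Finset ℕ)) : Prop :=
  ∀ A ∈ 𝓐, ∀ B ∈ 𝓑, t ≤ (A ∩ B).card

/-- The Frankl family `F_i^ℓ = {F ⊆ [n] : |F ∩ [ℓ+2i]| ≥ ℓ+i}`. -/
def FF (n ℓ i : ℕ) : Finset (Finset ℕ) :=
  (Finset.Icc 1 n).powerset.filter fun F => ℓ + i ≤ (F ∩ Finset.Icc 1 (ℓ + 2 * i)).card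

/-- `F` reaches level `ℓ`: there is `0 ≤ j ≤ n` with `2|F ∩ [j]| ≥ j + ℓ`. -/
def Reaches (n ℓ : ℕ) (F : Finset ℕ) : Prop :=
  ∃ j ≤ n, j + ℓ ≤ 2 * (F ∩ Finset.Icc 1 j).card

/-- The number of steps `0 ≤ j ≤ n` at which `F` hits level `ℓ`, i.e. `2|F ∩ [j]| = j + ℓ`. -/
def hitCount (n ℓ : ℕ) (F : Finset ℕ) : ℕ :=
  ((Finset.range (n + 1)).filter fun j => 2 * (F ∩ Finset.Icc 1 j).card = j + ℓ).card

/-- `F^ℓ`: all subsets of `[n]` reaching level `ℓ`. -/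
def Fwalk (n ℓ : ℕ) : Finset (Finset ℕ) :=
  (Finset.Icc 1 n).powerset.filter fun F => Reaches n ℓ F

/-- `tilde F^ℓ`: all subsets of `[n]` reaching level `ℓ+1`. -/
def Ftilde (n ℓ : ℕ) : Finset (Finset ℕ) :=
  (Finset.Icc 1 n).powerset.filter fun F => Reaches n (ℓ + 1) F

/-- `hat F^ℓ`: subsets not reaching level `ℓ+1` and hitting level `ℓ` exactly once. -/
def Fhat (n ℓ : ℕ) : Finset (Finset ℕ) :=
  (Finset.Icc 1 n).powerset.filter fun F => ¬ Reaches n (ℓ + 1) F ∧ hitCount n ℓ F = 1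

/-- `ddot F^ℓ`: subsets not reaching level `ℓ+1` and hitting level `ℓ` at least twice. -/
def Fddot (n ℓ : ℕ) : Finset (Finset ℕ) :=
  (Finset.Icc 1 n).powerset.filter fun F => ¬ Reaches n (ℓ + 1) F ∧ 2 ≤ hitCount n ℓ F

/-- The `(i,j)`-shift of a single set `F`, relative to the family `𝓕`. -/
def shiftSet (i j : ℕ) (𝓕 : Finset (Finset ℕ)) (F : Finset ℕ) : Finset ℕ :=
  if j ∈ F ∧ i ∉ F ∧ insert i (F.erase j) ∉ 𝓕 then insert i (F.erase j) else F

/-- The `(i,j)`-shift `s_{ij}(𝓕)` of a family `𝓕`. -/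
def shiftFam (i j : ℕ) (𝓕 : Finset (Finset ℕ)) : Finset (Finset ℕ) :=
  𝓕.image (shiftSet i j 𝓕)

/-- A family is shifted if all shifts `s_{ij}`, `1 ≤ i < j ≤ n`, fix it. -/
def Shifted (n : ℕ) (𝓕 : Finset (Finset ℕ)) : Prop :=
  ∀ i j : ℕ, 1 ≤ i → i < j → j ≤ n → shiftFam i j 𝓕 = 𝓕

/-- A family of subsets of `[n]` is inclusion maximal. -/
def InclMax (n : ℕ) (𝓕 : Finset (Finset ℕ)) : Prop :=
  ∀ F ∈ 𝓕, ∀ F' : Finset ℕ, F ⊆ F' → F' ⊆ Finset.Icc 1 n → F' ∈ 𝓕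

/-- `λ(𝓕)`: the largest `λ ≥ 0` such that every member of `𝓕` reaches level `λ`. -/
def lam (n : ℕ) (𝓕 : Finset (Finset ℕ)) : ℕ :=
  Nat.findGreatest (fun ℓ => ∀ F ∈ 𝓕, Reaches n ℓ F) n

/-- Two families of subsets of `[n]` are isomorphic via a permutation of `[n]`. -/
def Isom (n : ℕ) (𝓖₁ 𝓖₂ : Finset (Finset ℕ)) : Prop :=
  ∃ σ : Equiv.Perm ℕ, (∀ k ∈ Finset.Icc 1 n, σ k ∈ Finset.Icc 1 n) ∧
    𝓖₁ = 𝓖₂.image fun G => G.image σ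

/-- The quantity `f(ℓ, i, p)` from Ahlswede–Khachatrian type estimates. -/
def fLP (ℓ i : ℕ) (p : ℝ) : ℝ :=
  (p / (1 - p)) ^ (ℓ + 1) +
    (Nat.choose (ℓ + 2 * i) i : ℝ) * ((ℓ + 1 : ℝ) / (ℓ + i + 1)) * p ^ (ℓ + i) *
      (1 - p) ^ i * (1 - p / (1 - p))

/-- The walk `D_s^t(i) = [t−1] ∪ {t+s,…,t+2s} ∪ {t+2s+i+2k : k ≥ 1} ∩ [n]`. -/
def DD (n t s i : ℕ) : Finset ℕ :=
  Finset.Icc 1 (t - 1) ∪ Finset.Icc (t + s) (t + 2 * s) ∪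
    ((Finset.Icc 1 n).filter fun m => ∃ k ∈ Finset.Icc 1 n, m = t + 2 * s + i + 2 * k)

end

/-!
Write `α = p / q` and `β = 1 / q`. Each factor `f(ℓ, i, p)` is `α^(ℓ+1)` plus a nonnegative
binomial term. In the first factor (`i = s ≥ 10`) that term is at most
`C(ℓ+2s, s) p^s · p^ℓ ≤ 0.007 p^ℓ`, since `(ℓ+2s) p ≤ 2 + s/50` and `C(N, s) x^s ≤ (e N x / s)^s`.
In the second factor it is at most `α^ℓ`, being `α^ℓ` times a binomial probability.
The two `ℓ`'s add up to `2t`, and `β^(2t+2) ≤ e^4 < 55`, so the product is at most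
`55 p^(2t) (1 + p)(0.007 + p) ≈ 0.385 (t p^(t+1))²`, whereas `μ_p(F_1^t) ≥ t p^(t+1)`.
-/

theorem Nat.choose_mul_pow_le_exp_mul_div_pow (N s : ℕ) {x : ℝ} (hx : 0 ≤ x) :
    (N.choose s : ℝ) * x ^ s ≤ (Real.exp 1 * (N * x) / s) ^ s := by
  have hfac : (0 : ℝ) < s.factorial := mod_cast s.factorial_pos
  have hss : (s : ℝ) ^ s ≤ Real.exp s * s.factorial :=
    (div_le_iff₀ hfac).mp (Real.pow_div_factorial_le_exp _ s.cast_nonneg s)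
  have hspos : (0 : ℝ) < (s : ℝ) ^ s := by
    rcases s.eq_zero_or_pos with rfl | hs
    · simp
    · positivity
  calc (N.choose s : ℝ) * x ^ s ≤ (N : ℝ) ^ s / s.factorial * x ^ s := by
        gcongr; exact Nat.choose_le_pow_div s N
    _ = (N * x) ^ s / s.factorial := by rw [mul_pow]; ring
    _ ≤ (N * x) ^ s * Real.exp s / (s : ℝ) ^ s := by
        rw [div_le_div_iff₀ hfac hspos]
        calc (N * x) ^ s * (s : ℝ) ^ s ≤ (N * x) ^ s * (Real.exp s * s.factorial) := by gcongr
          _ = _ := by ring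
    _ = (Real.exp 1 * (N * x) / s) ^ s := by
        rw [div_pow, mul_pow (Real.exp 1), ← Real.exp_nat_mul, mul_one, mul_pow]; ring

theorem Nat.choose_mul_pow_le_of_mul_le {N s : ℕ} (hs : 10 ≤ s) {x : ℝ} (hx : 0 ≤ x)
    (hN : N * x ≤ 2 + s / 50) : (N.choose s : ℝ) * x ^ s ≤ 0.007 := by
  have hs' : (10 : ℝ) ≤ s := mod_cast hs
  have hratio : Real.exp 1 * (N * x) / s ≤ 0.6 := by
    rw [div_le_iff₀ (by linarith)]
    nlinarith [Real.exp_pos 1, Real.exp_one_lt_d9, mul_nonneg (by linarith : (0 : ℝ) ≤ s) hx]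
  calc (N.choose s : ℝ) * x ^ s ≤ (Real.exp 1 * (N * x) / s) ^ s :=
        N.choose_mul_pow_le_exp_mul_div_pow s hx
    _ ≤ 0.6 ^ s := by gcongr
    _ ≤ 0.6 ^ 10 := pow_le_pow_of_le_one (by norm_num) (by norm_num) hs
    _ ≤ 0.007 := by norm_num

theorem Nat.choose_mul_pow_mul_one_sub_pow_le_one {n k : ℕ} (hk : k ≤ n) {p : ℝ} (hp0 : 0 ≤ p)
    (hp1 : p ≤ 1) : (n.choose k : ℝ) * p ^ k * (1 - p) ^ (n - k) ≤ 1 := by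
  have hq : 0 ≤ 1 - p := by linarith
  calc (n.choose k : ℝ) * p ^ k * (1 - p) ^ (n - k)
      = p ^ k * (1 - p) ^ (n - k) * n.choose k := by ring
    _ ≤ ∑ m ∈ Finset.range (n + 1), p ^ m * (1 - p) ^ (n - m) * n.choose m :=
        Finset.single_le_sum (f := fun m => p ^ m * (1 - p) ^ (n - m) * (n.choose m : ℝ))
          (fun m _ => by positivity) (Finset.mem_range.mpr (Nat.lt_succ_of_le hk))
    _ = 1 := by rw [← add_pow, add_sub_cancel, one_pow]

theorem inv_one_sub_le_exp {x : ℝ} (hx : x < 1) : (1 - x)⁻¹ ≤ Real.exp (x / (1 - x)) := by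
  have hq : 0 < 1 - x := by linarith
  calc (1 - x)⁻¹ = x / (1 - x) + 1 := by field_simp; ring
    _ ≤ _ := Real.add_one_le_exp _

theorem inv_one_sub_pow_le_exp {x : ℝ} (hx : x < 1) (n : ℕ) :
    (1 - x)⁻¹ ^ n ≤ Real.exp (n * (x / (1 - x))) := by
  rw [Real.exp_nat_mul]
  gcongr
  exact inv_one_sub_le_exp hx

theorem exp_four_lt : Real.exp 4 < 55 := by
  rw [show (4 : ℝ) = (4 : ℕ) * 1 by norm_num, Real.exp_nat_mul]
  calc Real.exp 1 ^ 4 < 2.7182818286 ^ 4 := by gcongr; exact Real.exp_one_lt_d9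
    _ < 55 := by norm_num

section fLP

variable {p : ℝ}

theorem div_one_sub_le_one (hp : p ≤ 1 / 2) : p / (1 - p) ≤ 1 := by
  rw [div_le_one (by linarith)]; linarith

theorem fLP_nonneg (ℓ i : ℕ) (hp0 : 0 ≤ p) (hp : p ≤ 1 / 2) : 0 ≤ fLP ℓ i p := by
  have hq : 0 ≤ 1 - p := by linarith
  have hα : 0 ≤ 1 - p / (1 - p) := sub_nonneg.mpr (div_one_sub_le_one hp)
  unfold fLP
  positivity

theorem fLP_le (ℓ i : ℕ) (hp0 : 0 ≤ p) (hp : p ≤ 1 / 2) :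
    fLP ℓ i p ≤ (p / (1 - p)) ^ (ℓ + 1) + (ℓ + 2 * i).choose i * p ^ (ℓ + i) * (1 - p) ^ i := by
  have hq : 0 ≤ 1 - p := by linarith
  have hratio : ((ℓ + 1 : ℝ) / (ℓ + i + 1)) ≤ 1 := by
    rw [div_le_one (by positivity)]; linarith [(i.cast_nonneg : (0 : ℝ) ≤ i)]
  have hα : 1 - p / (1 - p) ≤ 1 := by linarith [div_nonneg hp0 hq]
  have hα0 : 0 ≤ 1 - p / (1 - p) := sub_nonneg.mpr (div_one_sub_le_one hp)
  have hterm : (ℓ + 2 * i).choose i * ((ℓ + 1 : ℝ) / (ℓ + i + 1)) * p ^ (ℓ + i) * (1 - p) ^ i *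
      (1 - p / (1 - p)) ≤ (ℓ + 2 * i).choose i * 1 * p ^ (ℓ + i) * (1 - p) ^ i * 1 := by
    gcongr
  unfold fLP
  linarith

theorem fLP_le_add_mul_pow {c : ℝ} (ℓ i : ℕ) (hp0 : 0 ≤ p) (hp : p ≤ 1 / 2)
    (hc : (ℓ + 2 * i).choose i * p ^ i ≤ c) :
    fLP ℓ i p ≤ (p / (1 - p)) ^ (ℓ + 1) + c * p ^ ℓ := by
  refine (fLP_le ℓ i hp0 hp).trans ?_
  have hq : 0 ≤ 1 - p := by linarith
  calc (p / (1 - p)) ^ (ℓ + 1) + (ℓ + 2 * i).choose i * p ^ (ℓ + i) * (1 - p) ^ i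
      ≤ (p / (1 - p)) ^ (ℓ + 1) + (ℓ + 2 * i).choose i * p ^ (ℓ + i) * 1 := by
        gcongr; exact pow_le_one₀ hq (by linarith)
    _ = (p / (1 - p)) ^ (ℓ + 1) + (ℓ + 2 * i).choose i * p ^ i * p ^ ℓ := by ring
    _ ≤ _ := by gcongr

theorem fLP_le_pow_succ_add_pow (ℓ i : ℕ) (hp0 : 0 ≤ p) (hp : p ≤ 1 / 2) :
    fLP ℓ i p ≤ (p / (1 - p)) ^ (ℓ + 1) + (p / (1 - p)) ^ ℓ := by
  refine (fLP_le ℓ i hp0 hp).trans ?_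
  have hq : 0 < 1 - p := by linarith
  have hbinom := Nat.choose_mul_pow_mul_one_sub_pow_le_one (n := ℓ + 2 * i) (k := i)
    (by omega) hp0 (by linarith)
  rw [show ℓ + 2 * i - i = ℓ + i by omega] at hbinom
  have hcancel : (p / (1 - p)) ^ ℓ * (1 - p) ^ (ℓ + i) = p ^ ℓ * (1 - p) ^ i := by
    rw [div_pow, pow_add]; field_simp
  calc (p / (1 - p)) ^ (ℓ + 1) + (ℓ + 2 * i).choose i * p ^ (ℓ + i) * (1 - p) ^ i
      = (p / (1 - p)) ^ (ℓ + 1) +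
          (ℓ + 2 * i).choose i * p ^ i * (1 - p) ^ (ℓ + i) * (p / (1 - p)) ^ ℓ := by
        linear_combination (-((ℓ + 2 * i).choose i * p ^ i : ℝ)) * hcancel
    _ ≤ (p / (1 - p)) ^ (ℓ + 1) + 1 * (p / (1 - p)) ^ ℓ := by gcongr
    _ = _ := by ring

theorem fLP_mul_fLP_le {K c : ℝ} {ℓ₁ ℓ₂ i j : ℕ} (hp0 : 0 ≤ p) (hp : p ≤ 1 / 2)
    (hK : (1 - p)⁻¹ ^ (ℓ₁ + ℓ₂ + 2) ≤ K) (hc : (ℓ₁ + 2 * i).choose i * p ^ i ≤ c) :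
    fLP ℓ₁ i p * fLP ℓ₂ j p ≤ K * p ^ (ℓ₁ + ℓ₂) * ((1 + p) * (c + p)) := by
  have hβ : 1 ≤ (1 - p)⁻¹ := one_le_inv₀ (by linarith) |>.mpr (by linarith)
  have hβK : ∀ k ≤ ℓ₁ + ℓ₂ + 2, (1 - p)⁻¹ ^ k ≤ K := fun k hk =>
    (pow_le_pow_right₀ hβ hk).trans hK
  have hc0 : 0 ≤ c := le_trans (by positivity) hc
  calc fLP ℓ₁ i p * fLP ℓ₂ j p
      ≤ ((p / (1 - p)) ^ (ℓ₁ + 1) + c * p ^ ℓ₁) *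
          ((p / (1 - p)) ^ (ℓ₂ + 1) + (p / (1 - p)) ^ ℓ₂) :=
        mul_le_mul (fLP_le_add_mul_pow ℓ₁ i hp0 hp hc) (fLP_le_pow_succ_add_pow ℓ₂ j hp0 hp)
          (fLP_nonneg ℓ₂ j hp0 hp)
          (add_nonneg (pow_nonneg (div_nonneg hp0 (by linarith)) _) (by positivity))
    _ = p ^ (ℓ₁ + ℓ₂) * (p ^ 2 * (1 - p)⁻¹ ^ (ℓ₁ + ℓ₂ + 2) + p * (1 - p)⁻¹ ^ (ℓ₁ + ℓ₂ + 1) +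
          c * p * (1 - p)⁻¹ ^ (ℓ₂ + 1) + c * (1 - p)⁻¹ ^ ℓ₂) := by
        simp only [div_eq_mul_inv]; ring
    _ ≤ p ^ (ℓ₁ + ℓ₂) * (p ^ 2 * K + p * K + c * p * K + c * K) := by
        gcongr <;> apply hβK <;> omega
    _ = _ := by ring

theorem mul_pow_succ_le_frankl_weight (t : ℕ) (hp0 : 0 ≤ p) (hp : (t + 2) * p ≤ 2) :
    t * p ^ (t + 1) ≤ (t + 2) * p ^ (t + 1) * (1 - p) + p ^ (t + 2) := by
  linear_combination mul_nonneg (pow_nonneg hp0 (t + 1)) (sub_nonneg.mpr hp) + pow_nonneg hp0 (t + 2)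

end fLP

/-- the bound `g(s,s') < 0.99 (μ_p(F_1^t))²` for `s ≥ 10`. -/
theorem statement_12 (t : ℕ) (ht : 200 ≤ t) (p : ℝ)
    (hp1 : 1 / ((t : ℝ) + 1) ≤ p) (hp2 : p ≤ 2 / ((t : ℝ) + 3))
    (s s' : ℕ) (hs' : s' ≤ s) (hs : 10 ≤ s) (hts : 1 ≤ t + s' - s) :
    fLP (t + s' - s) s p * fLP (t + s - s') s' p <
      0.99 * (((t : ℝ) + 2) * p ^ (t + 1) * (1 - p) + p ^ (t + 2)) ^ 2 := by
  have hT : (200 : ℝ) ≤ t := mod_cast ht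
  have hp0 : 0 < p := lt_of_lt_of_le (by positivity) hp1
  have hpt1 : 1 ≤ p * (t + 1) := (div_le_iff₀ (by positivity)).mp hp1
  have hpt3 : p * (t + 3) ≤ 2 := (le_div_iff₀ (by positivity)).mp hp2
  have hlen : t + s' - s + (t + s - s') = 2 * t := by omega
  have hK : (1 - p)⁻¹ ^ (t + s' - s + (t + s - s') + 2) ≤ 55 := by
    rw [hlen]
    refine (inv_one_sub_pow_le_exp (by linarith) _).trans (le_trans ?_ exp_four_lt.le)
    gcongr
    rw [mul_div_assoc', div_le_iff₀ (by linarith)]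
    push_cast
    nlinarith
  have hc : (t + s' - s + 2 * s).choose s * p ^ s ≤ (0.007 : ℝ) := by
    refine Nat.choose_mul_pow_le_of_mul_le hs hp0.le ?_
    have hN : ((t + s' - s + 2 * s : ℕ) : ℝ) ≤ t + 2 * s := mod_cast (by omega)
    nlinarith [s.cast_nonneg (α := ℝ)]
  have hfinal : 55 * p ^ (2 * t) * ((1 + p) * (0.007 + p)) < 0.99 * (t * p ^ (t + 1)) ^ 2 := by
    rw [mul_pow, ← pow_mul, show (t + 1) * 2 = 2 * t + 2 by ring, pow_add]
    have hpoly : 55 * ((1 + p) * (0.007 + p)) < 0.99 * t ^ 2 * p ^ 2 := by nlinarith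
    nlinarith [pow_pos hp0 (2 * t)]
  calc fLP (t + s' - s) s p * fLP (t + s - s') s' p
      ≤ 55 * p ^ (2 * t) * ((1 + p) * (0.007 + p)) := by
        simpa only [hlen] using fLP_mul_fLP_le hp0.le (by linarith) hK hc
    _ < 0.99 * (t * p ^ (t + 1)) ^ 2 := hfinal
    _ ≤ _ := by
        gcongr
        exact mul_pow_succ_le_frankl_weight t hp0.le (by linarith)
end

section
/- Let t ≥ 200 be an integer, let p be real with 1/(t+1) ≤ p ≤ 2/(t+3), and let s be an integer with 2 ≤ s ≤ 9. Then g(s, 1) < g(1, 1), where g(s, s') := f(t−s+s', s, p)·f(t+s−s', s', p). -/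
open Finset

open scoped Classical

private lemma aux1 (t s : ℕ) (hs : 2 ≤ s) : (t+s)*t^(s-1) < (t+1)^s := by
  induction s, hs using Nat.le_induction with
  | base => simpa using by nlinarith [sq_nonneg t]
  | succ s hs ih =>
      have h1 : (t+(s+1)) * t^(s+1-1) = ((t+s+1)*t) * t^(s-1) := by
        have : s + 1 - 1 = (s-1) + 1 := by omega
        rw [this, pow_succ]; ring
      have h2 : (t+s+1)*t ≤ (t+s)*(t+1) := by nlinarith
      calc (t+(s+1)) * t^(s+1-1) = ((t+s+1)*t) * t^(s-1) := h1
        _ ≤ ((t+s)*(t+1)) * t^(s-1) := Nat.mul_le_mul_right _ h2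
        _ = (t+1) * ((t+s)*t^(s-1)) := by ring
        _ < (t+1) * (t+1)^s := (Nat.mul_lt_mul_left (by omega)).mpr ih
        _ = (t+1)^(s+1) := by ring

private lemma combine (A₁ B₁ A₂ B₂ A B : ℝ) (hA1 : 0 < A₁) (hA2 : 0 < A₂)
    (hB1 : 0 < B₁) (hB2 : 0 < B₂) (hA0 : 0 < A) (hB0 : 0 < B)
    (hA : A₁ * A₂ = A * A) (h1 : A₁*B₂ < A*B) (h2 : A₂*B₁ < A*B) :
    (A₁+B₁)*(A₂+B₂) < (A+B)*(A+B) := by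
  have h3 : B₁*B₂ < B*B := by
    have key : (B₁*B₂)*(A*A) < (B*B)*(A*A) := by
      calc (B₁*B₂)*(A*A) = (A₁*B₂)*(A₂*B₁) := by rw [← hA]; ring
        _ < (A*B)*(A*B) := by apply mul_lt_mul'' h1 h2 <;> positivity
        _ = (B*B)*(A*A) := by ring
    exact lt_of_mul_lt_mul_right key (by positivity)
  nlinarith [h1, h2, h3, hA]

set_option maxHeartbeats 2000000
/-- `g(s,1) < g(1,1)` for `2 ≤ s ≤ 9`. -/
theorem statement_14 (t : ℕ) (ht : 200 ≤ t) (p : ℝ)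
    (hp1 : 1 / ((t : ℝ) + 1) ≤ p) (hp2 : p ≤ 2 / ((t : ℝ) + 3))
    (s : ℕ) (hs2 : 2 ≤ s) (hs : s ≤ 9) :
    fLP (t + 1 - s) s p * fLP (t + s - 1) 1 p < fLP t 1 p * fLP t 1 p := by
  have ht1 : (200:ℝ) ≤ (t:ℝ) := by exact_mod_cast ht
  have hs2r : (2:ℝ) ≤ (s:ℝ) := by exact_mod_cast hs2
  have hs9r : (s:ℝ) ≤ 9 := by exact_mod_cast hs
  have htp : (0:ℝ) < (t:ℝ)+1 := by linarith
  have hp0 : 0 < p := lt_of_lt_of_le (by positivity) hp1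
  have hp203 : p ≤ 2/203 := by
    refine hp2.trans ?_
    rw [div_le_div_iff₀ (by linarith) (by norm_num)]
    linarith
  have hq0 : (0:ℝ) < 1 - p := by linarith
  have h1e : (0:ℝ) < 1 - p/(1-p) := by
    rw [sub_pos, div_lt_one hq0]; linarith
  have he0 : (0:ℝ) < p/(1-p) := div_pos hp0 hq0
  -- normal forms of the three fLP values
  have hF : fLP t 1 p = (p/(1-p))^(t+1)
      + ((t:ℝ)+1) * (p^(t+1) * (1-p) * (1 - p/(1-p))) := by
    simp only [fLP, Nat.mul_one, Nat.choose_one_right, pow_one]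
    push_cast
    field_simp
    ring
  have hF2 : fLP (t+s-1) 1 p = (p/(1-p))^(t+s)
      + ((t:ℝ)+s) * (p^(t+s) * (1-p) * (1 - p/(1-p))) := by
    have e1 : t+s-1+1 = t+s := by omega
    have e2 : t+s-1+2*1 = t+s+1 := by omega
    have hc : ((t+s-1:ℕ):ℝ) = (t:ℝ)+(s:ℝ)-1 := by
      rw [Nat.cast_sub (by omega : 1 ≤ t+s)]; push_cast; ring
    simp only [fLP, e1, e2, pow_one, Nat.choose_one_right, hc]
    push_cast
    have hne : (t:ℝ)+(s:ℝ)-1+1+1 ≠ 0 := by nlinarith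
    field_simp
    ring
  have hF1 : fLP (t+1-s) s p = (p/(1-p))^(t+2-s)
      + ((t+1+s).choose s : ℝ) * (((t:ℝ)+2-s)/((t:ℝ)+2))
        * (p^(t+1) * (1-p)^s * (1 - p/(1-p))) := by
    have e1 : t+1-s+1 = t+2-s := by omega
    have e2 : t+1-s+2*s = t+1+s := by omega
    have e3 : t+1-s+s = t+1 := by omega
    have hc : ((t+1-s:ℕ):ℝ) = (t:ℝ)+1-(s:ℝ) := by
      rw [Nat.cast_sub (by omega : s ≤ t+1)]; push_cast; ring
    simp only [fLP, e1, e2, e3, hc]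
    ring
  rw [hF, hF1, hF2]
  -- scalar core inequality for the Y-comparison
  have hY : ((t:ℝ)+s) * (1-p)^(s-1) < (t:ℝ)+1 := by
    have hnat : ((t:ℝ)+s)*(t:ℝ)^(s-1) < ((t:ℝ)+1)^s := by
      exact_mod_cast aux1 t s hs2
    have hbound : (1-p)*((t:ℝ)+1) ≤ (t:ℝ) := by
      have := (div_le_iff₀ htp).mp hp1
      nlinarith
    have key : ((t:ℝ)+s)*(1-p)^(s-1) * ((t:ℝ)+1)^(s-1)
        < ((t:ℝ)+1) * ((t:ℝ)+1)^(s-1) := by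
      calc ((t:ℝ)+s)*(1-p)^(s-1)*((t:ℝ)+1)^(s-1)
          = ((t:ℝ)+s) * ((1-p)*((t:ℝ)+1))^(s-1) := by rw [mul_pow]; ring
        _ ≤ ((t:ℝ)+s) * (t:ℝ)^(s-1) := by
            apply mul_le_mul_of_nonneg_left _ (by linarith)
            exact pow_le_pow_left₀ (by positivity) hbound _
        _ < ((t:ℝ)+1)^s := hnat
        _ = ((t:ℝ)+1) * ((t:ℝ)+1)^(s-1) := by
            rw [← pow_succ']; congr 1; omega
    exact lt_of_mul_lt_mul_right key (by positivity)
  -- scalar core inequality for the X-comparison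
  set C : ℝ := ((t+1+s).choose s : ℝ) with hCdef
  have hC0 : (0:ℝ) < C := by
    rw [hCdef]; exact_mod_cast Nat.choose_pos (by omega : s ≤ t+1+s)
  have h2s : (0:ℝ) < (t:ℝ)+2-s := by linarith
  have hfacpos : (0:ℝ) < (Nat.factorial s : ℝ) := by
    exact_mod_cast Nat.factorial_pos s
  have hCs : C * (Nat.factorial s : ℝ) ≤ ((t:ℝ)+1+s)^s := by
    have h := Nat.descFactorial_le_pow (t+1+s) s
    rw [Nat.descFactorial_eq_factorial_mul_choose] at h
    rw [hCdef]
    calc ((t+1+s).choose s : ℝ) * (Nat.factorial s : ℝ)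
        = ((Nat.factorial s * (t+1+s).choose s : ℕ) : ℝ) := by push_cast; ring
      _ ≤ (((t+1+s)^s : ℕ) : ℝ) := by exact_mod_cast h
      _ = ((t:ℝ)+1+s)^s := by push_cast; ring
  -- the polynomial inequality
  have polyIneq : ((t:ℝ)+1+s)^s * (((t:ℝ)+2)-s) * 2^(s-1)
      < (Nat.factorial s : ℝ) * (((t:ℝ)+1)*((t:ℝ)+2)) * ((t:ℝ)+3)^(s-1) := by
    have hpe : ((t:ℝ)+3)^s = ((t:ℝ)+3)^(s-1) * ((t:ℝ)+3) := by
      rw [← pow_succ]; congr 1; omega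
    rcases eq_or_lt_of_le hs2 with h2 | h3
    · -- s = 2
      subst h2
      have key : ∀ x : ℝ, 200 ≤ x → (x+1+2)^2*((x+2)-(2:ℕ))*2^(2-1)
          < (Nat.factorial 2:ℝ)*((x+1)*(x+2))*(x+3)^(2-1) := by
        intro x hx
        norm_num [Nat.factorial]
        nlinarith
      exact key (t:ℝ) ht1
    · -- 3 ≤ s
      have hs3 : 3 ≤ s := h3
      have hb : (t:ℝ)+1+s ≤ (210/203) * ((t:ℝ)+3) := by linarith
      have hpow : ((t:ℝ)+1+s)^s ≤ (210/203)^s * ((t:ℝ)+3)^s := by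
        calc ((t:ℝ)+1+s)^s ≤ ((210/203) * ((t:ℝ)+3))^s :=
              pow_le_pow_left₀ (by positivity) hb s
          _ = (210/203)^s * ((t:ℝ)+3)^s := by rw [mul_pow]
      have hfacb : (210/203:ℝ)^s * 2^(s-1) ≤ (Nat.factorial s : ℝ) := by
        interval_cases s <;> norm_num [Nat.factorial]
      have hquad : ((t:ℝ)+3)*(((t:ℝ)+2)-s) < ((t:ℝ)+1)*((t:ℝ)+2) := by
        have : (3:ℝ) ≤ s := by exact_mod_cast hs3
        nlinarith
      calc ((t:ℝ)+1+s)^s * (((t:ℝ)+2)-s) * 2^(s-1)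
          ≤ ((210/203)^s * ((t:ℝ)+3)^s) * (((t:ℝ)+2)-s) * 2^(s-1) := by
            apply mul_le_mul_of_nonneg_right _ (by positivity)
            exact mul_le_mul_of_nonneg_right hpow (by linarith)
        _ = ((210/203)^s * 2^(s-1)) * (((t:ℝ)+3)^(s-1) * (((t:ℝ)+3)*(((t:ℝ)+2)-s))) := by
            rw [hpe]; ring
        _ < ((210/203)^s * 2^(s-1)) * (((t:ℝ)+3)^(s-1) * (((t:ℝ)+1)*((t:ℝ)+2))) := by
            apply mul_lt_mul_of_pos_left _ (by positivity)
            exact mul_lt_mul_of_pos_left hquad (by positivity)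
        _ ≤ (Nat.factorial s : ℝ) * (((t:ℝ)+3)^(s-1) * (((t:ℝ)+1)*((t:ℝ)+2))) := by
            apply mul_le_mul_of_nonneg_right hfacb (by positivity)
        _ = (Nat.factorial s : ℝ) * (((t:ℝ)+1)*((t:ℝ)+2)) * ((t:ℝ)+3)^(s-1) := by ring
  have h2p : (2/((t:ℝ)+3))^(s-1) * ((t:ℝ)+3)^(s-1) = 2^(s-1) := by
    rw [div_pow, div_mul_cancel₀]
    positivity
  have hcore2' : C * (((t:ℝ)+2)-s) * p^(s-1) < ((t:ℝ)+1) * ((t:ℝ)+2) := by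
    have hppow : p^(s-1) ≤ (2/((t:ℝ)+3))^(s-1) := pow_le_pow_left₀ hp0.le hp2 _
    have key : C * (((t:ℝ)+2)-s) * p^(s-1) * ((Nat.factorial s : ℝ) * ((t:ℝ)+3)^(s-1))
        < ((t:ℝ)+1) * ((t:ℝ)+2) * ((Nat.factorial s : ℝ) * ((t:ℝ)+3)^(s-1)) := by
      calc C * (((t:ℝ)+2)-s) * p^(s-1) * ((Nat.factorial s : ℝ) * ((t:ℝ)+3)^(s-1))
          ≤ C * (((t:ℝ)+2)-s) * (2/((t:ℝ)+3))^(s-1) * ((Nat.factorial s : ℝ) * ((t:ℝ)+3)^(s-1)) := by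
            apply mul_le_mul_of_nonneg_right _ (by positivity)
            exact mul_le_mul_of_nonneg_left hppow (by positivity)
        _ = (C * (Nat.factorial s : ℝ)) * ((((t:ℝ)+2)-s) * ((2/((t:ℝ)+3))^(s-1) * ((t:ℝ)+3)^(s-1))) := by
            ring
        _ = (C * (Nat.factorial s : ℝ)) * ((((t:ℝ)+2)-s) * 2^(s-1)) := by rw [h2p]
        _ ≤ ((t:ℝ)+1+s)^s * ((((t:ℝ)+2)-s) * 2^(s-1)) := by
            apply mul_le_mul_of_nonneg_right hCs (by positivity)
        _ = ((t:ℝ)+1+s)^s * (((t:ℝ)+2)-s) * 2^(s-1) := by ring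
        _ < (Nat.factorial s : ℝ) * (((t:ℝ)+1)*((t:ℝ)+2)) * ((t:ℝ)+3)^(s-1) := polyIneq
        _ = ((t:ℝ)+1) * ((t:ℝ)+2) * ((Nat.factorial s : ℝ) * ((t:ℝ)+3)^(s-1)) := by ring
    exact lt_of_mul_lt_mul_right key (by positivity)
  -- arrange powers
  have hap : (p/(1-p))^(s-1)*(1-p)^(s-1) = p^(s-1) := by
    rw [← mul_pow, div_mul_cancel₀]
    exact ne_of_gt hq0
  have keyA : (p/(1-p))^(t+1) = (p/(1-p))^(t+2-s) * (p/(1-p))^(s-1) := by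
    rw [← pow_add]; congr 1; omega
  have keyA2 : (p/(1-p))^(t+s) = (p/(1-p))^(t+1) * (p/(1-p))^(s-1) := by
    rw [← pow_add]; congr 1; omega
  have keyp : p^(t+s) = p^(t+1) * p^(s-1) := by
    rw [← pow_add]; congr 1; omega
  have keyq : (1-p)^s = (1-p) * (1-p)^(s-1) := by
    rw [← pow_succ']; congr 1; omega
  -- the two cross-term inequalities
  have h1 : (p/(1-p))^(t+2-s) * (((t:ℝ)+s) * (p^(t+s) * (1-p) * (1 - p/(1-p))))
      < (p/(1-p))^(t+1) * (((t:ℝ)+1) * (p^(t+1) * (1-p) * (1 - p/(1-p)))) := by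
    have hcore1 : ((t:ℝ)+s) * p^(s-1) < ((t:ℝ)+1) * (p/(1-p))^(s-1) := by
      have := mul_lt_mul_of_pos_right hY (pow_pos he0 (s-1))
      calc ((t:ℝ)+s) * p^(s-1)
          = (((t:ℝ)+s) * (1-p)^(s-1)) * (p/(1-p))^(s-1) := by rw [← hap]; ring
        _ < ((t:ℝ)+1) * (p/(1-p))^(s-1) := this
    calc (p/(1-p))^(t+2-s) * (((t:ℝ)+s) * (p^(t+s) * (1-p) * (1 - p/(1-p))))
        = ((p/(1-p))^(t+2-s) * p^(t+1) * (1-p) * (1 - p/(1-p))) * (((t:ℝ)+s) * p^(s-1)) := by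
          rw [keyp]; ring
      _ < ((p/(1-p))^(t+2-s) * p^(t+1) * (1-p) * (1 - p/(1-p))) * (((t:ℝ)+1) * (p/(1-p))^(s-1)) := by
          apply mul_lt_mul_of_pos_left hcore1 (by positivity)
      _ = (p/(1-p))^(t+1) * (((t:ℝ)+1) * (p^(t+1) * (1-p) * (1 - p/(1-p)))) := by
          rw [keyA]; ring
  have h2 : (p/(1-p))^(t+s) * (C * (((t:ℝ)+2-s)/((t:ℝ)+2)) * (p^(t+1) * (1-p)^s * (1 - p/(1-p))))
      < (p/(1-p))^(t+1) * (((t:ℝ)+1) * (p^(t+1) * (1-p) * (1 - p/(1-p)))) := by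
    have hcore2 : C * (((t:ℝ)+2-s)/((t:ℝ)+2)) * ((p/(1-p))^(s-1) * (1-p)^(s-1)) < (t:ℝ)+1 := by
      rw [hap]
      have heq : C * (((t:ℝ)+2-s)/((t:ℝ)+2)) * p^(s-1)
          = (C * (((t:ℝ)+2)-s) * p^(s-1)) / ((t:ℝ)+2) := by ring
      rw [heq, div_lt_iff₀ (by linarith)]
      exact hcore2'
    calc (p/(1-p))^(t+s) * (C * (((t:ℝ)+2-s)/((t:ℝ)+2)) * (p^(t+1) * (1-p)^s * (1 - p/(1-p))))
        = ((p/(1-p))^(t+1) * p^(t+1) * (1-p) * (1 - p/(1-p)))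
            * (C * (((t:ℝ)+2-s)/((t:ℝ)+2)) * ((p/(1-p))^(s-1) * (1-p)^(s-1))) := by
          rw [keyA2, keyq]; ring
      _ < ((p/(1-p))^(t+1) * p^(t+1) * (1-p) * (1 - p/(1-p))) * ((t:ℝ)+1) := by
          apply mul_lt_mul_of_pos_left hcore2 (by positivity)
      _ = (p/(1-p))^(t+1) * (((t:ℝ)+1) * (p^(t+1) * (1-p) * (1 - p/(1-p)))) := by ring
  -- assemble
  apply combine
  · positivity
  · positivity
  · have hd : (0:ℝ) < ((t:ℝ)+2-(s:ℝ))/((t:ℝ)+2) := div_pos h2s (by linarith)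
    have hrest : (0:ℝ) < p^(t+1) * (1-p)^s * (1 - p/(1-p)) := by positivity
    exact mul_pos (mul_pos hC0 hd) hrest
  · positivity
  · positivity
  · positivity
  · rw [← pow_add, ← pow_add]; congr 1; omega
  · exact h1
  · exact h2
end

section
/- Let t ≥ 200 be an integer, let p be real with 1/(t+1) ≤ p ≤ 2/(t+3), and let s be an integer with 2 ≤ s ≤ 9. Then g(s, 0) < g(1, 0), where g(s, s') := f(t−s+s', s, p)·f(t+s−s', s', p). -/
open Finset

open scoped Classical

/-!
Write `t = m + n + 1`, `s = n + 1`, `q = 1 - p`, `α = p / q`, `w = 1 - α`, `X = α ^ (m + 1)` and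
`P = p ^ t`. Both products then expand to `X² α ^ (2n+2)` plus three cross terms, and the cross
terms compare one by one (using `q α = p`) as soon as `c p ^ n ≤ t`, where
`c = C(t+s, s) (t-s+1)/(t+1)`. For `p ≤ 2/(t+3)` this reduces to the integer inequality
`C(t+s, s) (t-s+1) 2 ^ (s-1) ≤ t (t+1) (t+3) ^ (s-1)`, an equality at `s = 1` that survives
each step `s → s + 1` because `2 (t+s+1) ≤ (s+1) (t+3)`.
-/

lemma fLP_zero_right (ℓ : ℕ) (p : ℝ) :
    fLP ℓ 0 p = (p / (1 - p)) ^ (ℓ + 1) + p ^ ℓ * (1 - p / (1 - p)) := by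
  have : (ℓ + 1 : ℝ) ≠ 0 := by positivity
  simp [fLP, this]

lemma fLP_one_right (ℓ : ℕ) (p : ℝ) :
    fLP ℓ 1 p =
      (p / (1 - p)) ^ (ℓ + 1) + (ℓ + 1) * p ^ (ℓ + 1) * (1 - p) * (1 - p / (1 - p)) := by
  have : (ℓ + 1 + 1 : ℝ) ≠ 0 := by positivity
  simp only [fLP, Nat.choose_one_right]
  push_cast
  field_simp
  ring

lemma choose_mul_two_pow_le (n m : ℕ) :
    (m + 2 * n + 2).choose (n + 1) * (m + 1) * 2 ^ n ≤
      (m + n + 1) * (m + n + 2) * (m + n + 4) ^ n := by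
  -- `t = m + n + 1` stays fixed along the induction, so the step uses the hypothesis at `m + 1`.
  induction n generalizing m with
  | zero => simp [Nat.choose_one_right, mul_comm]
  | succ n ih =>
    have hchoose : (m + 2 * n + 4).choose (n + 2) * (n + 2) =
        (m + 2 * n + 3).choose (n + 1) * (m + 2 * n + 4) :=
      (Nat.add_one_mul_choose_eq (m + 2 * n + 3) (n + 1)).symm.trans (mul_comm _ _)
    have hratio : 2 * (m + 2 * n + 4) * (m + 1) ≤ (n + 2) * (m + n + 5) * (m + 2) :=
      Nat.mul_le_mul (by nlinarith) (by omega)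
    refine Nat.le_of_mul_le_mul_right ?_ (show 0 < n + 2 by omega)
    calc (m + 2 * (n + 1) + 2).choose (n + 1 + 1) * (m + 1) * 2 ^ (n + 1) * (n + 2)
        = (m + 2 * n + 4).choose (n + 2) * (n + 2) * (m + 1) * 2 ^ (n + 1) := by
          rw [show m + 2 * (n + 1) + 2 = m + 2 * n + 4 by omega]; ring
      _ = (m + 2 * n + 3).choose (n + 1) * 2 ^ n * (2 * (m + 2 * n + 4) * (m + 1)) := by
          rw [hchoose]; ring
      _ ≤ (m + 2 * n + 3).choose (n + 1) * 2 ^ n * ((n + 2) * (m + n + 5) * (m + 2)) := by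
          gcongr
      _ = (m + 1 + 2 * n + 2).choose (n + 1) * (m + 1 + 1) * 2 ^ n * ((n + 2) * (m + n + 5)) := by
          rw [show m + 1 + 2 * n + 2 = m + 2 * n + 3 by omega]; ring
      _ ≤ (m + 1 + n + 1) * (m + 1 + n + 2) * (m + 1 + n + 4) ^ n * ((n + 2) * (m + n + 5)) :=
          Nat.mul_le_mul_right _ (ih (m + 1))
      _ = (m + (n + 1) + 1) * (m + (n + 1) + 2) * (m + (n + 1) + 4) ^ (n + 1) * (n + 2) := by
          ring

lemma choose_mul_pow_le {p : ℝ} (hp0 : 0 ≤ p) (m n : ℕ) (hp : p ≤ 2 / ((m + n : ℝ) + 4)) :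
    ((m + 2 * n + 2).choose (n + 1) : ℝ) * ((m + 1) / (m + n + 2)) * p ^ n ≤ m + n + 1 := by
  have hnat : (((m + 2 * n + 2).choose (n + 1) : ℕ) : ℝ) * (m + 1) * 2 ^ n ≤
      (m + n + 1) * (m + n + 2) * (m + n + 4) ^ n := by
    exact_mod_cast choose_mul_two_pow_le n m
  calc ((m + 2 * n + 2).choose (n + 1) : ℝ) * ((m + 1) / (m + n + 2)) * p ^ n
      ≤ ((m + 2 * n + 2).choose (n + 1) : ℝ) * ((m + 1) / (m + n + 2)) *
          (2 / ((m + n : ℝ) + 4)) ^ n := by gcongr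
    _ = ((m + 2 * n + 2).choose (n + 1) : ℝ) * (m + 1) * 2 ^ n /
          ((m + n + 2) * (m + n + 4) ^ n) := by
        rw [div_pow]; field_simp
    _ ≤ m + n + 1 := by
        rw [div_le_iff₀ (by positivity)]; linarith

lemma expanded_product_lt {X P w q p α c T : ℝ} {n : ℕ} (hn : 1 ≤ n) (hX : 0 < X) (hP : 0 < P)
    (hw : 0 < w) (hq : 0 < q) (hp0 : 0 < p) (hpα : p < α) (hqα : q * α = p) (hc0 : 0 ≤ c)
    (hc : c * p ^ n ≤ T) :
    (X + c * P * q ^ (n + 1) * w) * (X * α ^ (2 * n + 2) + P * p ^ (n + 1) * w) <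
      (X * α ^ n + T * P * q * w) * (X * α ^ (n + 2) + P * p * w) := by
  have hα : 0 < α := hp0.trans hpα
  have hq1 : q ≤ 1 := le_of_mul_le_mul_right (by linarith) hα
  have hT : 0 ≤ T := (by positivity : 0 ≤ c * p ^ n).trans hc
  have e1 : p ^ (n + 1) < p * α ^ n := by
    rw [pow_succ']
    exact mul_lt_mul_of_pos_left (pow_lt_pow_left₀ hpα hp0.le (by omega)) hp0
  have e2 : c * q ^ (n + 1) * α ^ (2 * n + 2) ≤ T * q * α ^ (n + 2) := by
    calc c * q ^ (n + 1) * α ^ (2 * n + 2) = c * (q * α) ^ n * (q * α ^ (n + 2)) := by ring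
      _ ≤ T * (q * α ^ (n + 2)) := by rw [hqα]; gcongr
      _ = T * q * α ^ (n + 2) := by ring
  have e3 : c * q ^ (n + 1) * p ^ (n + 1) ≤ T * q * p := by
    calc c * q ^ (n + 1) * p ^ (n + 1) = c * p ^ n * q ^ n * (q * p) := by ring
      _ ≤ T * 1 * (q * p) := by
        gcongr
        exact pow_le_one₀ hq.le hq1
      _ = T * q * p := by ring
  linear_combination (X * P * w) * e1 + (X * P * w) * e2 + (P * P * w * w) * e3

lemma fLP_mul_fLP_lt {p : ℝ} (hp0 : 0 < p) (hp : p < 1 / 2) {m n : ℕ} (hn : 1 ≤ n)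
    (hc : ((m + 2 * n + 2).choose (n + 1) : ℝ) * ((m + 1) / (m + n + 2)) * p ^ n ≤ m + n + 1) :
    fLP m (n + 1) p * fLP (m + 2 * n + 2) 0 p < fLP (m + n) 1 p * fLP (m + n + 2) 0 p := by
  set c : ℝ := ((m + 2 * n + 2).choose (n + 1) : ℝ) * ((m + 1) / (m + n + 2))
  set q := 1 - p
  set α := p / q
  set w := 1 - α
  set X := α ^ (m + 1)
  set P := p ^ (m + n + 1)
  have hq : 0 < q := by linarith
  have hpα : p < α := by rw [lt_div_iff₀ hq]; nlinarith
  have hw : 0 < w := by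
    have : α < 1 := by rw [div_lt_one hq]; linarith
    linarith
  have hf1 : fLP m (n + 1) p = X + c * P * q ^ (n + 1) * w := by
    simp only [fLP, c, X, P, w, α, q]
    rw [show m + 2 * (n + 1) = m + 2 * n + 2 by omega, show m + (n + 1) = m + n + 1 by omega]
    push_cast
    ring
  have hf2 : fLP (m + 2 * n + 2) 0 p = X * α ^ (2 * n + 2) + P * p ^ (n + 1) * w := by
    rw [fLP_zero_right]; ring
  have hf3 : fLP (m + n) 1 p = X * α ^ n + (m + n + 1) * P * q * w := by
    rw [fLP_one_right]; push_cast; ring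
  have hf4 : fLP (m + n + 2) 0 p = X * α ^ (n + 2) + P * p * w := by
    rw [fLP_zero_right]; ring
  rw [hf1, hf2, hf3, hf4]
  exact expanded_product_lt hn (by positivity) (by positivity) hw hq hp0 hpα
    (mul_div_cancel₀ p hq.ne') (by positivity) hc

/-- `g(s,0) < g(1,0)` for `2 ≤ s ≤ 9`. -/
theorem statement_15 (t : ℕ) (ht : 200 ≤ t) (p : ℝ)
    (hp1 : 1 / ((t : ℝ) + 1) ≤ p) (hp2 : p ≤ 2 / ((t : ℝ) + 3))
    (s : ℕ) (hs2 : 2 ≤ s) (hs : s ≤ 9) :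
    fLP (t - s) s p * fLP (t + s) 0 p < fLP (t - 1) 1 p * fLP (t + 1) 0 p := by
  obtain ⟨n, rfl⟩ : ∃ n, s = n + 1 := ⟨s - 1, by omega⟩
  obtain ⟨m, rfl⟩ : ∃ m, t = m + n + 1 := ⟨t - n - 1, by omega⟩
  have hp0 : 0 < p := lt_of_lt_of_le (by positivity) hp1
  have hp2' : p ≤ 2 / ((m + n : ℝ) + 4) := by
    convert hp2 using 2; push_cast; ring
  have hp_half : p < 1 / 2 := by
    refine hp2'.trans_lt ?_
    rw [div_lt_div_iff₀ (by positivity) two_pos]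
    have hn : (1 : ℝ) ≤ n := by exact_mod_cast (by omega : 1 ≤ n)
    linarith [(by positivity : (0 : ℝ) ≤ m)]
  rw [show m + n + 1 - (n + 1) = m by omega, show m + n + 1 + (n + 1) = m + 2 * n + 2 by omega,
    show m + n + 1 - 1 = m + n by omega]
  exact fLP_mul_fLP_lt hp0 hp_half (by omega) (choose_mul_pow_le hp0.le m n hp2')
end
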